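/- arXiv:math/0611740 — 5 statements merged into one kernel-verified Lean document; each statement's English description precedes it below -/
import Mathlib

section
/- No sound, effectively axiomatized theory can prove all true non-halting statements: if P is a predicate on codes that is computably enumerable (i.e., there is a partial computable function whose domain is exactly {c | P c}) and sound for non-halting (P c implies that c does not halt on input 0), then P is incomplete: there exists a code c that does not halt on input 0 but for which P c fails. -/
/-!
A sound theory that proved every true non-halting statement would enumerate exactly the
non-halting codes, making non-halting on input 0 a recursively enumerable property, which the
undecidability of the halting problem rules out.
-/

theorem REPred.exists_not_of_imp_of_not_re {α : Type*} [Primcodable α] {p q : α → Prop}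
    (hp : REPred p) (hq : ¬ REPred q) (hpq : ∀ a, p a → q a) : ∃ a, q a ∧ ¬ p a := by
  by_contra! hqp
  exact hq (hp.of_eq fun a => ⟨hpq a, hqp a⟩)

theorem no_complete_sound_nonhalting_theory
    (P : Nat.Partrec.Code → Prop)
    (hce : ∃ g : Nat.Partrec.Code →. Unit, Partrec g ∧ ∀ c, P c ↔ (g c).Dom)
    (hsound : ∀ c, P c → ¬ (c.eval 0).Dom) :
    ∃ c : Nat.Partrec.Code, ¬ (c.eval 0).Dom ∧ ¬ P c := by
  obtain ⟨g, hg, hP⟩ := hce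
  have hP_re : REPred P := hg.dom_re.of_eq fun c => (hP c).symm
  exact hP_re.exists_not_of_imp_of_not_re (ComputablePred.halting_problem_not_re 0) hsound
end

section
/- One cannot computably produce arbitrarily large elegant programs: there is no computable function f : ℕ → Code such that for every n, the code f n is elegant and has size at least n (i.e., n ≤ encode (f n)). -/
/-- A code is elegant if no smaller code computes the same partial function. -/
def Elegant (c : Nat.Partrec.Code) : Prop :=
  ∀ c' : Nat.Partrec.Code, c'.eval = c.eval →
    Encodable.encode c ≤ Encodable.encode c'

theorem no_computable_large_elegant_programs :
    ¬ ∃ f : ℕ → Nat.Partrec.Code, Computable f ∧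
      ∀ n : ℕ, Elegant (f n) ∧ n ≤ Encodable.encode (f n) := by
  rintro ⟨f, hf, h⟩
  have hg : Computable fun c : Nat.Partrec.Code => f (Encodable.encode c + 1) :=
    hf.comp (Computable.succ.comp Computable.encode)
  obtain ⟨c, hc⟩ := Nat.Partrec.Code.fixed_point hg
  have h1 := (h (Encodable.encode c + 1)).1 c hc.symm
  have h2 := (h (Encodable.encode c + 1)).2
  omega
end

section
/- Elegance is undecidable: the predicate on codes given by 'c is elegant', i.e., every code c' with c'.eval = c.eval satisfies encode c ≤ encode c', is not a computable predicate. -/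
open Nat.Partrec Nat.Partrec.Code Encodable Denumerable

theorem ComputablePred.comp {α β : Type*} [Primcodable α] [Primcodable β] {p : β → Prop}
    {f : α → β} (hp : ComputablePred p) (hf : Computable f) : ComputablePred fun a => p (f a) :=
  let ⟨_, hdec⟩ := hp
  ⟨fun _ => inferInstance, hdec.comp hf⟩

theorem exists_elegant_eval_eq (c : Code) : ∃ e, Elegant e ∧ e.eval = c.eval := by
  obtain ⟨e, he, hmin⟩ :=
    (measure encode).wf.has_min {e : Code | e.eval = c.eval} ⟨c, by rfl⟩
  exact ⟨e, fun c' hc' => not_lt.1 (hmin c' (hc'.trans he)), he⟩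

theorem infinite_setOf_elegant : {c : Code | Elegant c}.Infinite := by
  choose e he heval using fun n : ℕ => exists_elegant_eval_eq (Code.const n)
  have hinj : Function.Injective e := fun m n hmn => by
    have hconst : (Code.const m).eval = (Code.const n).eval := by rw [← heval, ← heval, hmn]
    simpa using congrFun hconst 0
  exact (Set.infinite_range_of_injective hinj).mono (Set.range_subset_iff.2 he)

theorem exists_elegant_encode_gt (N : ℕ) : ∃ e, Elegant e ∧ N < encode e := by
  obtain ⟨_, ⟨e, he, rfl⟩, hN⟩ :=
    (infinite_setOf_elegant.image encode_injective.injOn).exists_gt N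
  exact ⟨e, he, hN⟩

theorem not_computable_of_elegant_of_encode_lt {F : Code → Code} (hel : ∀ c, Elegant (F c))
    (hlt : ∀ c, encode c < encode (F c)) : ¬ Computable F := fun hF => by
  obtain ⟨c, hc⟩ := fixed_point hF
  exact (hlt c).not_ge (hel c c hc.symm)

theorem elegance_undecidable : ¬ ComputablePred Elegant := by
  classical
  intro hElegant
  have hex : ∀ c : Code, ∃ n, Elegant (ofNat Code (encode c + 1 + n)) := fun c => by
    obtain ⟨e, he, hlt⟩ := exists_elegant_encode_gt (encode c)
    exact ⟨encode e - (encode c + 1), by rwa [Nat.add_sub_cancel' hlt, ofNat_encode]⟩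
  have hoffset : Computable₂ fun (c : Code) (n : ℕ) => encode c + 1 + n :=
    (Primrec.nat_add.comp (Primrec.succ.comp (Primrec.encode.comp Primrec.fst))
      Primrec.snd).to_comp
  have hsearch : Computable fun c : Code => Nat.find (hex c) :=
    Computable.find (hElegant.comp ((Computable.ofNat Code).comp hoffset)) hex
  refine not_computable_of_elegant_of_encode_lt (fun c => Nat.find_spec (hex c)) (fun c => ?_)
    ((Computable.ofNat Code).comp (hoffset.comp Computable.id hsearch))
  rw [encode_ofNat]
  omega
end

section
/- Kraft inequality: if S is a set of finite binary strings that is prefix-free, meaning no element of S is a proper prefix of another element of S, then the sum over s in S of 2^(-(length of s)) is at most 1. -/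
lemma kraft_finset (F : Finset (List Bool))
    (hpf : ∀ s ∈ F, ∀ t ∈ F, s <+: t → s = t) :
    ∑ s ∈ F, (2 : ℝ) ^ (-(s.length : ℤ)) ≤ 1 := by
  set N := F.sup List.length with hN
  have hlen : ∀ s ∈ F, s.length ≤ N := fun s hs => Finset.le_sup hs
  -- extensions of s to length N
  set E : List Bool → Finset (List Bool) :=
    fun s => (Finset.univ : Finset (Fin (N - s.length) → Bool)).image
      (fun v => s ++ List.ofFn v) with hE
  have hcard : ∀ s, (E s).card = 2 ^ (N - s.length) := by
    intro s
    rw [hE, Finset.card_image_of_injective _ ?_, Finset.card_univ]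
    · simp [Fintype.card_fun]
    · intro v w h
      simpa using List.ofFn_injective (List.append_cancel_left h)
  have hmem : ∀ s t, t ∈ E s → s <+: t ∧ (s.length ≤ N → t.length = N) := by
    intro s t ht
    simp only [hE, Finset.mem_image, Finset.mem_univ, true_and] at ht
    obtain ⟨v, rfl⟩ := ht
    refine ⟨⟨_, rfl⟩, fun h => ?_⟩
    simp [Nat.add_sub_cancel' h]
  have hdisj : ∀ s ∈ F, ∀ t ∈ F, s ≠ t → Disjoint (E s) (E t) := by
    intro s hs t ht hst
    rw [Finset.disjoint_left]
    intro x hxs hxt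
    have h1 := (hmem s x hxs).1
    have h2 := (hmem t x hxt).1
    rcases List.prefix_or_prefix_of_prefix h1 h2 with h | h
    · exact hst (hpf s hs t ht h)
    · exact hst (hpf t ht s hs h).symm
  -- counting
  have hcount : ∑ s ∈ F, 2 ^ (N - s.length) ≤ 2 ^ N := by
    calc ∑ s ∈ F, 2 ^ (N - s.length) = ∑ s ∈ F, (E s).card := by
          simp [hcard]
      _ = (F.biUnion E).card := (Finset.card_biUnion hdisj).symm
      _ ≤ 2 ^ N := by
          have : (F.biUnion E).card ≤ (Finset.univ : Finset (Fin N → Bool)).card := by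
            apply Finset.card_le_card_of_injOn (fun t (i : Fin N) => t.getD i.val false)
            · intro t _; exact Finset.mem_univ _
            · intro t ht t' ht' hfun
              simp only [Finset.mem_coe, Finset.mem_biUnion] at ht ht'
              obtain ⟨s, hs, hts⟩ := ht
              obtain ⟨s', hs', hts'⟩ := ht'
              have hlt : t.length = N := (hmem s t hts).2 (hlen s hs)
              have hlt' : t'.length = N := (hmem s' t' hts').2 (hlen s' hs')
              apply List.ext_getElem (hlt.trans hlt'.symm)
              intro i hi hi'
              have hiN : i < N := hlt ▸ hi
              have := congrFun hfun ⟨i, hiN⟩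
              simpa [List.getD, List.getElem?_eq_getElem hi, List.getElem?_eq_getElem hi'] using this
          simpa [Finset.card_univ, Fintype.card_fun] using this
  -- pass to reals
  have key : ∑ s ∈ F, (2 : ℝ) ^ (-(s.length : ℤ)) =
      (∑ s ∈ F, (2 : ℝ) ^ (N - s.length)) / 2 ^ N := by
    rw [Finset.sum_div]
    refine Finset.sum_congr rfl fun s hs => ?_
    have hL := hlen s hs
    rw [eq_div_iff (by positivity)]
    rw [← zpow_natCast (2 : ℝ) N, ← zpow_add₀ (by norm_num : (2:ℝ) ≠ 0),
      ← zpow_natCast (2 : ℝ) (N - s.length)]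
    congr 1
    push_cast [hL]
    ring
  rw [key, div_le_one (by positivity)]
  calc ∑ s ∈ F, (2 : ℝ) ^ (N - s.length)
      = ((∑ s ∈ F, 2 ^ (N - s.length) : ℕ) : ℝ) := by push_cast; rfl
    _ ≤ ((2 ^ N : ℕ) : ℝ) := by exact_mod_cast hcount
    _ = 2 ^ N := by push_cast; rfl

theorem kraft_inequality (S : Set (List Bool))
    (hpf : ∀ s ∈ S, ∀ t ∈ S, s <+: t → s = t) :
    ∑' s : S, (2 : ℝ) ^ (-(s.1.length : ℤ)) ≤ 1 := by
  by_cases h : Summable (fun s : S => (2 : ℝ) ^ (-(s.1.length : ℤ)))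
  · apply Summable.tsum_le_of_sum_le h
    intro F
    have hkey := kraft_finset (F.image Subtype.val) ?_
    · rw [Finset.sum_image (fun a _ b _ h => Subtype.val_injective h)] at hkey
      exact hkey
    · intro s hs t ht hst
      simp only [Finset.mem_image] at hs ht
      obtain ⟨⟨s, hsS⟩, _, rfl⟩ := hs
      obtain ⟨⟨t, htS⟩, _, rfl⟩ := ht
      exact hpf s hsS t htS hst
  · rw [tsum_eq_zero_of_not_summable h]
    norm_num
end

section
/- Knowing how many of a given finite list of programs halt suffices to compute exactly which ones halt: there exists a partial computable function F taking a pair (L, k) of a list of codes L and a natural number k, such that whenever k equals the number of codes c in L with (c.eval 0).Dom, F (L, k) is defined and equals the list of Booleans b of the same length as L with b[i] = true if and only if the i-th code of L halts on input 0. -/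
/-!
Dovetail: run all programs of `L` in parallel, step budget `s = 0, 1, 2, …`, until exactly `k`
of them have halted within `s` steps. Halting within `s` steps implies halting, so once `k` — the
true number of halting programs — is reached, the programs seen to halt are all of them.
-/

open scoped Classical

open Nat.Partrec (Code)
open Nat.Partrec.Code

theorem List.map_eq_map_of_countP_eq {α : Type*} {p q : α → Bool} {l : List α}
    (hpq : ∀ a ∈ l, p a → q a) (h : l.countP p = l.countP q) : l.map p = l.map q := by
  induction l with
  | nil => rfl
  | cons a l ih =>
    have hle : l.countP p ≤ l.countP q :=
      List.countP_mono_left fun b hb => hpq b (List.mem_cons_of_mem a hb)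
    have hpa := hpq a List.mem_cons_self
    cases hp : p a <;> cases hq : q a <;> simp_all

theorem Primrec.list_countP {α β : Type*} [Primcodable α] [Primcodable β] {f : α → List β}
    {p : α → β → Bool} (hf : Primrec f) (hp : Primrec₂ p) :
    Primrec fun a => (f a).countP (p a) :=
  (list_foldr hf (const 0) <| to₂ <|
      nat_add.comp (snd.comp snd) (cond (hp.comp fst (fst.comp snd)) (const 1) (const 0))).of_eq
    fun a => by dsimp; induction f a <;> simp [List.countP_cons, *]

noncomputable def halts (c : Code) : Bool := decide (c.eval 0).Dom

def haltsWithin (s : ℕ) (c : Code) : Bool := (evaln s c 0).isSome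

theorem primrec₂_haltsWithin : Primrec₂ haltsWithin :=
  Primrec.option_isSome.comp (primrec_evaln.comp ((Primrec.fst.pair Primrec.snd).pair
    (Primrec.const 0)))

theorem haltsWithin_mono {s t : ℕ} {c : Code} (hst : s ≤ t) (h : haltsWithin s c) :
    haltsWithin t c := by
  obtain ⟨x, hx⟩ := Option.isSome_iff_exists.1 h
  exact Option.isSome_iff_exists.2 ⟨x, evaln_mono hst hx⟩

theorem dom_of_haltsWithin {s : ℕ} {c : Code} (h : haltsWithin s c) : (c.eval 0).Dom := by
  obtain ⟨x, hx⟩ := Option.isSome_iff_exists.1 h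
  exact Part.dom_iff_mem.2 ⟨x, evaln_sound hx⟩

theorem exists_haltsWithin_of_dom {c : Code} (h : (c.eval 0).Dom) : ∃ s, haltsWithin s c := by
  obtain ⟨x, hx⟩ := Part.dom_iff_mem.1 h
  obtain ⟨s, hs⟩ := evaln_complete.1 hx
  exact ⟨s, Option.isSome_iff_exists.2 ⟨x, hs⟩⟩

theorem exists_forall_haltsWithin (L : List Code) :
    ∃ s, ∀ c ∈ L, (c.eval 0).Dom → haltsWithin s c := by
  choose! stage hstage using fun (c : Code) (h : (c.eval 0).Dom) => exists_haltsWithin_of_dom h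
  exact ⟨(L.map stage).sum, fun c hc hdom =>
    haltsWithin_mono (List.le_sum_of_mem (List.mem_map_of_mem hc)) (hstage c hdom)⟩

theorem map_haltsWithin_eq_of_countP_eq {L : List Code} {s : ℕ}
    (h : L.countP (haltsWithin s) = L.countP halts) :
    L.map (haltsWithin s) = L.map halts :=
  List.map_eq_map_of_countP_eq (fun _ _ hc => decide_eq_true (dom_of_haltsWithin hc)) h

def stageOfCount (p : List Code × ℕ) : Part ℕ :=
  Nat.rfind fun s => Part.some (decide (p.1.countP (haltsWithin s) = p.2))

theorem partrec_stageOfCount : Partrec stageOfCount :=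
  Partrec.rfind <| Computable.partrec <| Computable.to₂ <| Primrec.to_comp <|
    Primrec.eq.decide.comp
      (Primrec.list_countP (Primrec.fst.comp Primrec.fst) (primrec₂_haltsWithin.comp
        (Primrec.snd.comp Primrec.fst) Primrec.snd).to₂)
      (Primrec.snd.comp Primrec.fst)

def haltingList (p : List Code × ℕ) : Part (List Bool) :=
  (stageOfCount p).map fun s => p.1.map (haltsWithin s)

theorem partrec_haltingList : Partrec haltingList :=
  partrec_stageOfCount.map (Primrec.list_map (Primrec.fst.comp Primrec.fst)
    (primrec₂_haltsWithin.comp (Primrec.snd.comp Primrec.fst) Primrec.snd).to₂).to_comp.to₂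

theorem haltingList_countP_halts (L : List Code) :
    haltingList (L, L.countP halts) = Part.some (L.map halts) := by
  obtain ⟨s₀, hs₀⟩ := exists_forall_haltsWithin L
  have hcount₀ : L.countP (haltsWithin s₀) = L.countP halts :=
    List.countP_congr fun c hc => by
      simpa [halts] using ⟨fun h => dom_of_haltsWithin h, hs₀ c hc⟩
  have hdom : (stageOfCount (L, L.countP halts)).Dom :=
    Nat.rfind_dom.2 ⟨s₀, by simpa using hcount₀, fun _ => trivial⟩
  obtain ⟨s, hs⟩ := Part.dom_iff_mem.1 hdom
  have hcount : L.countP (haltsWithin s) = L.countP halts := by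
    simpa using Nat.rfind_spec hs
  exact Part.eq_some_iff.2 <|
    (Part.mem_map_iff _).2 ⟨s, hs, map_haltsWithin_eq_of_countP_eq hcount⟩

theorem halting_count_determines_halting_set :
    ∃ F : List Nat.Partrec.Code × ℕ →. List Bool, Partrec F ∧
      ∀ (L : List Nat.Partrec.Code) (k : ℕ),
        k = (L.countP fun c => decide ((c.eval 0).Dom)) →
        F (L, k) = Part.some (L.map fun c => decide ((c.eval 0).Dom)) :=
  ⟨haltingList, partrec_haltingList, by rintro L k rfl; exact haltingList_countP_halts L⟩
end
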